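/- arXiv:2604.27229 — 3 statements merged into one kernel-verified Lean document; each statement's English description precedes it below -/
import Mathlib

section
/- With notation as above, $\sum_m \dim V_{\mathbf{t},\mathrm{prim}}^{(m)} q^m = \tau_{< |\mathbf{t}|/2 - l + 1}\left( (1-q) \prod_{i=1}^l \frac{q^{t_i - 1} - 1}{q - 1} \right)$, where $\tau_{<c}$ truncates a polynomial to the terms of degree strictly less than $c$. -/
/-!
`∂ = lower` is the lowering operator of an `sl₂`-action. The raising operator `raise` moves the
`i`-th coordinate of a tuple `m` up with coefficient `(mᵢ + 1)(tᵢ - 2 - mᵢ)`, chosen so that the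
commutator `[raise, ∂]` acts on `V^(m)` as the scalar `2m - M`, where `M = ∑ᵢ (tᵢ - 2)` is the top
degree. Along the string `raiseᵏ v` of a primitive `v ∈ V^(m)` with `2m > M` these scalars never
vanish while `raiseᵏ v` eventually leaves the grading, so `v = 0`: `∂` is injective on `V^(m)`.
The complement `mᵢ ↦ tᵢ - 2 - mᵢ` conjugates `∂` into its transpose `A`, which is therefore
injective on `V^(m-1)` when `2m ≤ M + 1`; then `(∂ (A y)) ⬝ᵥ y = (A y) ⬝ᵥ (A y)` makes `∂ ∘ A`
invertible on `V^(m-1)`, so `∂ : V^(m) → V^(m-1)` is onto. Hence `dim V_prim^(m)` is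
`N(m) - N(m-1)` in the first range and `0` in the second, where `N(m)`, the number of tuples of
degree `m`, is the `m`-th coefficient of `∏ᵢ (1 + q + ⋯ + q^(tᵢ-2))`.
-/

open Finsupp

variable {l : ℕ}

/-- Tuples `(m₁,…,m_l)` with `0 ≤ mᵢ ≤ tᵢ - 2` (encoded as `mᵢ : Fin (tᵢ - 1)`). -/
abbrev Tup (t : Fin l → ℕ) := ∀ i : Fin l, Fin (t i - 1)

/-- The free `ℚ`-vector space on all tuples; its graded piece `V_𝐭^(m)` is `TupSpan t m`. -/
abbrev TupMod (t : Fin l → ℕ) := Tup t →₀ ℚ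

/-- Decrease the `i`-th coordinate of a tuple by one. -/
def dec (t : Fin l → ℕ) (f : Tup t) (i : Fin l) : Tup t :=
  Function.update f i ⟨(f i : ℕ) - 1, by have := (f i).isLt; omega⟩

/-- The lowering operator `∂`, sending a basis tuple to the sum of all tuples obtained by
decreasing one positive coordinate by one. -/
noncomputable def lower (t : Fin l → ℕ) : TupMod t →ₗ[ℚ] TupMod t :=
  Finsupp.lsum ℚ fun f =>
    LinearMap.toSpanSingleton ℚ (TupMod t)
      (∑ i ∈ Finset.univ.filter (fun i => (f i : ℕ) ≠ 0), Finsupp.single (dec t f i) 1)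

/-- The graded piece `V_𝐭^(m)`: the span of the basis tuples with coordinate sum `m`. -/
noncomputable def TupSpan (t : Fin l → ℕ) (m : ℕ) : Submodule ℚ (TupMod t) :=
  Submodule.span ℚ {x | ∃ f : Tup t, (∑ i, (f i : ℕ)) = m ∧ x = Finsupp.single f 1}

lemma Submodule.finrank_map_add_finrank_inf_ker {K V W : Type*} [DivisionRing K]
    [AddCommGroup V] [Module K V] [AddCommGroup W] [Module K W] (f : V →ₗ[K] W)
    (p : Submodule K V) [FiniteDimensional K p] :
    Module.finrank K (p.map f) + Module.finrank K ↥(p ⊓ LinearMap.ker f)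
      = Module.finrank K p := by
  have hker : (LinearMap.ker f).comap p.subtype = (p ⊓ LinearMap.ker f).comap p.subtype := by
    rw [Submodule.comap_inf, Submodule.comap_subtype_self, top_inf_eq]
  have h := (f.domRestrict p).finrank_range_add_finrank_ker
  rwa [LinearMap.range_domRestrict, LinearMap.ker_domRestrict, hker,
    (Submodule.comapSubtypeEquivOfLe (inf_le_left : p ⊓ LinearMap.ker f ≤ p)).finrank_eq] at h

section
variable {t : Fin l → ℕ}

def tupDeg (f : Tup t) : ℕ := ∑ i, (f i : ℕ)

def topDeg (t : Fin l → ℕ) : ℕ := ∑ i, (t i - 2)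

-- Capped at `tᵢ - 2`, where `raiseCoeff` vanishes.
def inc (t : Fin l → ℕ) (f : Tup t) (i : Fin l) : Tup t :=
  Function.update f i ⟨min ((f i : ℕ) + 1) (t i - 2), by have := (f i).isLt; omega⟩

def complTup (f : Tup t) : Tup t :=
  fun i => ⟨t i - 2 - (f i : ℕ), by have := (f i).isLt; omega⟩

lemma two_le_of_tup (f : Tup t) (i : Fin l) : 2 ≤ t i := by
  have := (f i).isLt; omega

@[simp] lemma dec_apply_self (f : Tup t) (i : Fin l) : (dec t f i i : ℕ) = (f i : ℕ) - 1 := by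
  simp [dec]

@[simp] lemma dec_apply_of_ne (f : Tup t) {i j : Fin l} (h : j ≠ i) : dec t f i j = f j :=
  Function.update_of_ne h _ _

@[simp] lemma inc_apply_self (f : Tup t) (i : Fin l) :
    (inc t f i i : ℕ) = min ((f i : ℕ) + 1) (t i - 2) := by
  simp [inc]

@[simp] lemma inc_apply_of_ne (f : Tup t) {i j : Fin l} (h : j ≠ i) : inc t f i j = f j :=
  Function.update_of_ne h _ _

@[simp] lemma complTup_apply (f : Tup t) (i : Fin l) :
    (complTup f i : ℕ) = t i - 2 - (f i : ℕ) := rfl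

lemma inc_dec {f : Tup t} {i : Fin l} (h : (f i : ℕ) ≠ 0) : inc t (dec t f i) i = f := by
  funext k
  by_cases hk : k = i
  · subst hk; ext; have := (f k).isLt; simp; omega
  · simp [hk]

lemma dec_inc {f : Tup t} {i : Fin l} (h : (f i : ℕ) < t i - 2) : dec t (inc t f i) i = f := by
  funext k
  by_cases hk : k = i
  · subst hk; ext; simp; omega
  · simp [hk]

lemma inc_dec_comm (f : Tup t) {i j : Fin l} (h : i ≠ j) :
    inc t (dec t f j) i = dec t (inc t f i) j := by
  funext k
  by_cases hki : k = i
  · subst hki; ext; simp [h]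
  · by_cases hkj : k = j
    · subst hkj; ext; simp [Ne.symm h]
    · simp [hki, hkj]

lemma complTup_complTup (f : Tup t) : complTup (complTup f) = f := by
  funext i; ext; have := (f i).isLt; simp; omega

lemma tupDeg_update_add (f : Tup t) (i : Fin l) (b : Fin (t i - 1)) :
    tupDeg (Function.update f i b) + f i = tupDeg f + b := by
  simp only [tupDeg, ← Finset.add_sum_erase _ _ (Finset.mem_univ i), Function.update_self]
  rw [Finset.sum_congr rfl fun j hj => by rw [Function.update_of_ne (Finset.ne_of_mem_erase hj)]]
  ring

lemma tupDeg_dec {f : Tup t} {i : Fin l} (h : (f i : ℕ) ≠ 0) :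
    tupDeg (dec t f i) + 1 = tupDeg f := by
  have := tupDeg_update_add f i ⟨(f i : ℕ) - 1, by have := (f i).isLt; omega⟩
  simp only at this
  rw [dec]; omega

lemma tupDeg_inc {f : Tup t} {i : Fin l} (h : (f i : ℕ) < t i - 2) :
    tupDeg (inc t f i) = tupDeg f + 1 := by
  have := tupDeg_update_add f i ⟨min ((f i : ℕ) + 1) (t i - 2), by have := (f i).isLt; omega⟩
  simp only at this
  rw [inc]; omega

lemma tupDeg_le_topDeg (f : Tup t) : tupDeg f ≤ topDeg t :=
  Finset.sum_le_sum fun i _ => by have := (f i).isLt; omega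

lemma tupDeg_complTup_add (f : Tup t) : tupDeg (complTup f) + tupDeg f = topDeg t := by
  rw [tupDeg, tupDeg, ← Finset.sum_add_distrib]
  exact Finset.sum_congr rfl fun i _ => by have := (f i).isLt; simp; omega

lemma tupSpan_eq_supported (t : Fin l → ℕ) (m : ℕ) :
    TupSpan t m = supported ℚ ℚ {f | tupDeg f = m} := by
  rw [supported_eq_span_single, TupSpan]
  congr 1
  ext x
  simp [tupDeg, eq_comm]

lemma single_mem_tupSpan {f : Tup t} {m : ℕ} (h : tupDeg f = m) (c : ℚ) :
    single f c ∈ TupSpan t m := by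
  rw [tupSpan_eq_supported]; exact single_mem_supported ℚ c h

open Finset in
lemma finrank_tupSpan (t : Fin l → ℕ) (m : ℕ) :
    Module.finrank ℚ (TupSpan t m) = #{f : Tup t | tupDeg f = m} := by
  rw [tupSpan_eq_supported, (supportedEquivFinsupp _).finrank_eq, Module.finrank_finsupp_self,
    Fintype.card_ofFinset]
  rfl

lemma tupSpan_le_comap {L : TupMod t →ₗ[ℚ] TupMod t} {m k : ℕ}
    (h : ∀ f : Tup t, tupDeg f = m → L (single f 1) ∈ TupSpan t k) :
    TupSpan t m ≤ (TupSpan t k).comap L := by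
  rw [TupSpan, Submodule.span_le]
  rintro _ ⟨f, hf, rfl⟩
  exact h f hf

lemma tupSpan_eq_bot {m : ℕ} (h : topDeg t < m) : TupSpan t m = ⊥ := by
  rw [TupSpan, Submodule.span_eq_bot]
  rintro _ ⟨f, rfl, rfl⟩
  exact absurd (tupDeg_le_topDeg f) (by rw [tupDeg]; omega)

lemma lower_single (f : Tup t) (c : ℚ) :
    lower t (single f c) = ∑ i with (f i : ℕ) ≠ 0, single (dec t f i) c := by
  simp [lower, Finset.smul_sum]

lemma tupSpan_succ_le_comap_lower (m : ℕ) : TupSpan t (m + 1) ≤ (TupSpan t m).comap (lower t) :=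
  tupSpan_le_comap fun f hf => by
    rw [lower_single]
    refine Submodule.sum_mem _ fun i hi => single_mem_tupSpan ?_ 1
    have := tupDeg_dec (Finset.mem_filter.mp hi).2
    omega

lemma tupSpan_zero_le_ker_lower : TupSpan t 0 ≤ LinearMap.ker (lower t) := by
  rw [TupSpan, Submodule.span_le]
  rintro _ ⟨f, hf, rfl⟩
  have hf0 : ∀ i, (f i : ℕ) = 0 := fun i => Finset.sum_eq_zero_iff.mp hf i (Finset.mem_univ i)
  simp [lower_single, hf0]

noncomputable def raiseCoeff (t : Fin l → ℕ) (f : Tup t) (i : Fin l) : ℚ :=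
  ((f i : ℚ) + 1) * ((t i : ℚ) - 2 - f i)

lemma raiseCoeff_eq_zero {f : Tup t} {i : Fin l} (h : ¬ (f i : ℕ) < t i - 2) :
    raiseCoeff t f i = 0 := by
  have htop : (f i : ℚ) = t i - 2 := by
    rw [show (f i : ℕ) = t i - 2 by have := (f i).isLt; omega, Nat.cast_sub (two_le_of_tup f i)]
    push_cast; ring
  simp [raiseCoeff, htop]

noncomputable def lowerAt (t : Fin l → ℕ) (i : Fin l) : Module.End ℚ (TupMod t) :=
  Finsupp.lsum ℚ fun f => if (f i : ℕ) = 0 then 0 else Finsupp.lsingle (dec t f i)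

noncomputable def raiseAt (t : Fin l → ℕ) (i : Fin l) : Module.End ℚ (TupMod t) :=
  Finsupp.lsum ℚ fun f => raiseCoeff t f i • Finsupp.lsingle (inc t f i)

noncomputable def raise (t : Fin l → ℕ) : Module.End ℚ (TupMod t) := ∑ i, raiseAt t i

@[simp] lemma lowerAt_single (i : Fin l) (f : Tup t) (c : ℚ) :
    lowerAt t i (single f c) = if (f i : ℕ) = 0 then 0 else single (dec t f i) c := by
  rw [lowerAt, lsum_single]
  split_ifs <;> simp

@[simp] lemma raiseAt_single (i : Fin l) (f : Tup t) (c : ℚ) :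
    raiseAt t i (single f c) = single (inc t f i) (raiseCoeff t f i * c) := by
  rw [raiseAt, lsum_single, LinearMap.smul_apply, lsingle_apply, smul_single, smul_eq_mul]

lemma lower_eq_sum_lowerAt (t : Fin l → ℕ) : lower t = ∑ i, lowerAt t i :=
  Finsupp.lhom_ext fun f c => by
    simp [lower_single, LinearMap.sum_apply, Finset.sum_filter, ite_not]

lemma lowerAt_mul_raiseAt_of_ne {i j : Fin l} (h : i ≠ j) :
    lowerAt t i * raiseAt t j = raiseAt t j * lowerAt t i :=
  Finsupp.lhom_ext fun f c => by
    have hc : raiseCoeff t (dec t f i) j = raiseCoeff t f j := by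
      simp [raiseCoeff, Ne.symm h]
    by_cases hf : (f i : ℕ) = 0
    · simp [h, hf, -single_mul]
    · simp [h, hf, hc, inc_dec_comm f (Ne.symm h), -single_mul]

lemma raiseAt_mul_lowerAt_sub_single (i : Fin l) (f : Tup t) (c : ℚ) :
    (raiseAt t i * lowerAt t i - lowerAt t i * raiseAt t i) (single f c)
      = single f ((2 * (f i : ℚ) + 2 - t i) * c) := by
  have hRL : raiseAt t i (lowerAt t i (single f c))
      = single f ((f i : ℚ) * ((t i : ℚ) - 1 - f i) * c) := by
    by_cases hf : (f i : ℕ) = 0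
    · simp [hf]
    · have hcast : (((f i : ℕ) - 1 : ℕ) : ℚ) = f i - 1 := by
        push_cast [Nat.one_le_iff_ne_zero.mpr hf]; ring
      simp only [lowerAt_single, hf, if_false, raiseAt_single, inc_dec hf, raiseCoeff,
        dec_apply_self, hcast]
      congr 1; ring
  have hLR : lowerAt t i (raiseAt t i (single f c))
      = single f (raiseCoeff t f i * c) := by
    by_cases hf : (f i : ℕ) < t i - 2
    · have : (inc t f i i : ℕ) ≠ 0 := by simp; omega
      simp only [raiseAt_single, lowerAt_single, this, if_false, dec_inc hf]
    · simp [raiseCoeff_eq_zero hf]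
  rw [LinearMap.sub_apply, Module.End.mul_apply, Module.End.mul_apply, hRL, hLR, ← single_sub,
    raiseCoeff]
  congr 1
  ring

lemma raise_mul_lower_sub_lower_mul_raise (t : Fin l → ℕ) :
    raise t * lower t - lower t * raise t
      = ∑ i, (raiseAt t i * lowerAt t i - lowerAt t i * raiseAt t i) := by
  rw [raise, lower_eq_sum_lowerAt, Finset.sum_mul_sum, Finset.sum_mul_sum, Finset.sum_comm
    (f := fun i j => lowerAt t i * raiseAt t j), ← Finset.sum_sub_distrib]
  refine Finset.sum_congr rfl fun j _ => ?_
  rw [← Finset.sum_sub_distrib]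
  exact Finset.sum_eq_single j (fun i _ hij => by rw [lowerAt_mul_raiseAt_of_ne hij, sub_self])
    (by simp)

lemma commutator_single (f : Tup t) (c : ℚ) :
    (raise t * lower t - lower t * raise t) (single f c)
      = (2 * (tupDeg f : ℚ) - topDeg t) • single f c := by
  have hsum : ∑ i, (2 * (f i : ℚ) + 2 - t i) = 2 * (tupDeg f : ℚ) - topDeg t := by
    simp only [tupDeg, topDeg, Nat.cast_sum, Nat.cast_sub (two_le_of_tup f _), Finset.mul_sum,
      ← Finset.sum_sub_distrib]
    exact Finset.sum_congr rfl fun i _ => by push_cast; ring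
  rw [raise_mul_lower_sub_lower_mul_raise, LinearMap.sum_apply]
  simp only [raiseAt_mul_lowerAt_sub_single]
  rw [← Finsupp.single_finsetSum, ← Finset.sum_mul, hsum, smul_single, smul_eq_mul]

lemma commutator_apply_of_mem {m : ℕ} {x : TupMod t} (hx : x ∈ TupSpan t m) :
    raise t (lower t x) - lower t (raise t x) = (2 * (m : ℚ) - topDeg t) • x := by
  suffices TupSpan t m ≤ LinearMap.ker
      (raise t * lower t - lower t * raise t - (2 * (m : ℚ) - topDeg t) • 1) by
    simpa [sub_eq_zero] using this hx
  rw [TupSpan, Submodule.span_le]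
  rintro _ ⟨f, hf, rfl⟩
  rw [SetLike.mem_coe, LinearMap.mem_ker, LinearMap.sub_apply, commutator_single, ← hf]
  simp [tupDeg]

lemma tupSpan_le_comap_raise (m : ℕ) : TupSpan t m ≤ (TupSpan t (m + 1)).comap (raise t) :=
  tupSpan_le_comap fun f hf => by
    rw [raise, LinearMap.sum_apply]
    refine Submodule.sum_mem _ fun i _ => ?_
    rw [raiseAt_single]
    by_cases hi : (f i : ℕ) < t i - 2
    · exact single_mem_tupSpan (by rw [tupDeg_inc hi, hf]) _
    · simp [raiseCoeff_eq_zero hi]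

lemma raise_pow_mem {m : ℕ} {v : TupMod t} (hv : v ∈ TupSpan t m) (k : ℕ) :
    (raise t ^ k) v ∈ TupSpan t (m + k) := by
  induction k with
  | zero => simpa using hv
  | succ k ih => rw [pow_succ', Module.End.mul_apply]; exact tupSpan_le_comap_raise _ ih

lemma lower_raise_pow_succ {m : ℕ} {v : TupMod t} (hv : v ∈ TupSpan t m) (h0 : lower t v = 0)
    (k : ℕ) :
    lower t ((raise t ^ (k + 1)) v)
      = -(((k : ℚ) + 1) * (2 * m - topDeg t + k)) • (raise t ^ k) v := by
  induction k with
  | zero =>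
    have := commutator_apply_of_mem hv
    rw [h0, map_zero, zero_sub, neg_eq_iff_eq_neg] at this
    rw [pow_one, pow_zero, Module.End.one_apply, this, ← neg_smul]
    congr 1
    ring
  | succ k ih =>
    set w := (raise t ^ (k + 1)) v
    have hc := commutator_apply_of_mem (raise_pow_mem hv (k + 1))
    rw [pow_succ', Module.End.mul_apply,
      ← sub_sub_cancel (raise t (lower t w)) (lower t (raise t w)), hc, ih, map_smul,
      ← Module.End.mul_apply, ← pow_succ', ← sub_smul]
    congr 1
    push_cast
    ring

lemma tupSpan_inf_ker_lower_eq_bot {m : ℕ} (h : topDeg t + 1 ≤ 2 * m) :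
    TupSpan t m ⊓ LinearMap.ker (lower t) = ⊥ := by
  refine (Submodule.eq_bot_iff _).mpr fun v ⟨hv, h0⟩ => ?_
  have hstep (k : ℕ) (hk : (raise t ^ (k + 1)) v = 0) : (raise t ^ k) v = 0 := by
    have := lower_raise_pow_succ hv h0 k
    rw [hk, map_zero, eq_comm, smul_eq_zero] at this
    refine this.resolve_left ?_
    have : (topDeg t : ℚ) + 1 ≤ 2 * m := by exact_mod_cast h
    exact neg_ne_zero.mpr (mul_ne_zero (by positivity) (by linarith [k.cast_nonneg (α := ℚ)]))
  have htop : (raise t ^ (topDeg t + 1)) v = 0 := by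
    simpa [tupSpan_eq_bot (show topDeg t < m + (topDeg t + 1) by omega)] using
      raise_pow_mem hv (topDeg t + 1)
  simpa using Nat.decreasingInduction (motive := fun k _ => (raise t ^ k) v = 0)
    (fun k _ => hstep k) htop (Nat.zero_le _)

noncomputable def complMap (t : Fin l → ℕ) : Module.End ℚ (TupMod t) :=
  Finsupp.lmapDomain ℚ ℚ complTup

noncomputable def lowerAdjoint (t : Fin l → ℕ) : Module.End ℚ (TupMod t) :=
  complMap t * lower t * complMap t

lemma complTup_injective : Function.Injective (complTup (t := t)) :=
  Function.LeftInverse.injective complTup_complTup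

lemma complMap_single (f : Tup t) (c : ℚ) : complMap t (single f c) = single (complTup f) c := by
  simp [complMap]

lemma complMap_apply (x : TupMod t) (f : Tup t) : complMap t x f = x (complTup f) := by
  conv_lhs => rw [← complTup_complTup f]
  exact mapDomain_apply complTup_injective x _

lemma complMap_complMap (x : TupMod t) : complMap t (complMap t x) = x := by
  ext f; simp [complMap_apply, complTup_complTup]

lemma tupSpan_le_comap_complMap (m : ℕ) :
    TupSpan t m ≤ (TupSpan t (topDeg t - m)).comap (complMap t) :=
  tupSpan_le_comap fun f hf => by
    rw [complMap_single]
    exact single_mem_tupSpan (by have := tupDeg_complTup_add f; omega) 1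

open Finset in
lemma lower_single_one_apply (f g : Tup t) :
    lower t (single f 1) g = #{i | (g i : ℕ) + 1 = f i ∧ ∀ k ≠ i, g k = f k} := by
  rw [lower_single, Finsupp.finsetSum_apply]
  simp only [single_apply]
  rw [Finset.sum_boole, Finset.filter_filter]
  congr 3
  ext i
  constructor
  · rintro ⟨hf, rfl⟩
    exact ⟨by simp; omega, fun k hk => dec_apply_of_ne f hk⟩
  · rintro ⟨hi, hk⟩
    refine ⟨by omega, funext fun k => ?_⟩
    by_cases hki : k = i
    · subst hki; ext; simp; omega
    · simp [hki, hk k hki]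

lemma lowerAdjoint_single_one_apply (f g : Tup t) :
    lowerAdjoint t (single g 1) f = lower t (single f 1) g := by
  have hcompl (k : Fin l) : complTup f k = complTup g k ↔ f k = g k := by
    have := (f k).isLt; have := (g k).isLt
    simp only [Fin.ext_iff, complTup_apply]; omega
  rw [lowerAdjoint, Module.End.mul_apply, Module.End.mul_apply, complMap_apply, complMap_single,
    lower_single_one_apply, lower_single_one_apply]
  congr 3
  ext i
  have := (f i).isLt; have := (g i).isLt
  simp only [complTup_apply, hcompl, eq_comm (a := g _)]
  exact and_congr (by omega) Iff.rfl

lemma dotProduct_lower (x y : TupMod t) :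
    ⇑(lower t x) ⬝ᵥ ⇑y = ⇑x ⬝ᵥ ⇑(lowerAdjoint t y) := by
  let B : TupMod t →ₗ[ℚ] TupMod t →ₗ[ℚ] ℚ :=
    (dotProductBilin ℚ ℚ).compl₁₂ Finsupp.lcoeFun Finsupp.lcoeFun
  have : B ∘ₗ lower t = B.compl₂ (lowerAdjoint t) := by
    ext f g
    simp [B, lowerAdjoint_single_one_apply, single_eq_pi_single]
  exact LinearMap.congr_fun₂ this x y

lemma tupSpan_le_comap_lowerAdjoint {m : ℕ} (h : m < topDeg t) :
    TupSpan t m ≤ (TupSpan t (m + 1)).comap (lowerAdjoint t) := by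
  intro y hy
  have h1 := tupSpan_le_comap_complMap m hy
  rw [show topDeg t - m = (topDeg t - (m + 1)) + 1 by omega] at h1
  have h2 := tupSpan_le_comap_complMap _ (tupSpan_succ_le_comap_lower _ h1)
  rwa [show topDeg t - (topDeg t - (m + 1)) = m + 1 by omega] at h2

lemma tupSpan_inf_ker_lowerAdjoint_eq_bot {m : ℕ} (h : 2 * m + 1 ≤ topDeg t) :
    TupSpan t m ⊓ LinearMap.ker (lowerAdjoint t) = ⊥ := by
  refine (Submodule.eq_bot_iff _).mpr fun y ⟨hy, h0⟩ => ?_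
  have hc : complMap t y ∈ TupSpan t (topDeg t - m) ⊓ LinearMap.ker (lower t) := by
    refine ⟨tupSpan_le_comap_complMap m hy, ?_⟩
    have := congrArg (complMap t) (show lowerAdjoint t y = 0 from h0)
    rwa [lowerAdjoint, Module.End.mul_apply, Module.End.mul_apply,
      complMap_complMap, map_zero] at this
  rw [tupSpan_inf_ker_lower_eq_bot (by omega)] at hc
  simpa [complMap_complMap] using congrArg (complMap t) ((Submodule.mem_bot ℚ).mp hc)

lemma map_lower_tupSpan_succ {m : ℕ} (h : 2 * m + 1 ≤ topDeg t) :
    (TupSpan t (m + 1)).map (lower t) = TupSpan t m := by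
  refine le_antisymm (Submodule.map_le_iff_le_comap.mpr (tupSpan_succ_le_comap_lower m)) ?_
  have hA := tupSpan_le_comap_lowerAdjoint (t := t) (m := m) (by omega)
  let E : TupSpan t m →ₗ[ℚ] TupSpan t m :=
    (lower t * lowerAdjoint t).restrict fun y hy => tupSpan_succ_le_comap_lower m (hA hy)
  have hE : Function.Injective E := by
    rw [← LinearMap.ker_eq_bot, Submodule.eq_bot_iff]
    rintro ⟨y, hy⟩ hEy
    have hLA : lower t (lowerAdjoint t y) = 0 := congrArg Subtype.val hEy
    have hAy : lowerAdjoint t y = 0 := by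
      rw [← Finsupp.coe_eq_zero, ← dotProduct_self_eq_zero, ← dotProduct_lower, hLA,
        Finsupp.coe_zero, zero_dotProduct]
    have := (Submodule.eq_bot_iff _).mp (tupSpan_inf_ker_lowerAdjoint_eq_bot h) y ⟨hy, hAy⟩
    exact Subtype.ext this
  intro y hy
  obtain ⟨⟨z, hz⟩, hEz⟩ := LinearMap.injective_iff_surjective.mp hE ⟨y, hy⟩
  exact ⟨lowerAdjoint t z, hA hz, congrArg Subtype.val hEz⟩

lemma finrank_tupSpan_inf_ker_lower_add {m : ℕ} (h : 2 * m + 1 ≤ topDeg t) :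
    Module.finrank ℚ ↥(TupSpan t (m + 1) ⊓ LinearMap.ker (lower t))
      + Module.finrank ℚ (TupSpan t m) = Module.finrank ℚ (TupSpan t (m + 1)) := by
  rw [← Submodule.finrank_map_add_finrank_inf_ker (lower t) (TupSpan t (m + 1)),
    map_lower_tupSpan_succ h, add_comm]

open Polynomial Finset in
lemma coeff_prod_geom_sum (t : Fin l → ℕ) (m : ℕ) :
    (∏ i, ∑ j ∈ range (t i - 1), (X : ℚ[X]) ^ j).coeff m = #{f : Tup t | tupDeg f = m} := by
  simp_rw [← Fin.sum_univ_eq_sum_range (fun j => (X : ℚ[X]) ^ j), prod_univ_sum,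
    Fintype.piFinset_univ, prod_pow_eq_pow_sum, finsetSum_coeff, coeff_X_pow]
  simp [tupDeg, eq_comm]

open Polynomial in
lemma finrank_tupSpan_inf_ker_lower_eq_coeff {m : ℕ} (h : 2 * m ≤ topDeg t + 1) :
    (Module.finrank ℚ ↥(TupSpan t m ⊓ LinearMap.ker (lower t)) : ℚ)
      = ((1 - X) * ∏ i, ∑ j ∈ Finset.range (t i - 1), (X : ℚ[X]) ^ j).coeff m := by
  rw [sub_mul, one_mul, coeff_sub, coeff_prod_geom_sum, ← finrank_tupSpan]
  cases m with
  | zero =>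
    rw [inf_eq_left.mpr tupSpan_zero_le_ker_lower, coeff_X_mul_zero, sub_zero]
  | succ m =>
    rw [coeff_X_mul, coeff_prod_geom_sum, ← finrank_tupSpan,
      ← finrank_tupSpan_inf_ker_lower_add (by omega)]
    push_cast
    ring

end

open Polynomial

/-- The factor `(q^(tᵢ-1)-1)/(q-1)` is written as the geometric sum `∑_{j<tᵢ-1} q^j`, and the
truncation condition `m < |𝐭|/2 - l + 1` as `2(m+l) < |𝐭| + 2`. -/
theorem stmt_5_general (l d : ℕ) (t : Fin l → ℕ) (ht : ∀ i, 2 ≤ t i ∧ t i ≤ d) :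
    (∑ m ∈ Finset.range ((∑ i, t i) + 1),
        Polynomial.C
          ((Module.finrank ℚ ↥(TupSpan t m ⊓ LinearMap.ker (lower t)) : ℕ) : ℚ)
          * Polynomial.X ^ m)
      = ∑ m ∈ Finset.range ((∑ i, t i) + 1),
          if 2 * (m + l) < (∑ i, t i) + 2 then
            Polynomial.C
              (((1 - Polynomial.X) *
                  ∏ i, (∑ j ∈ Finset.range (t i - 1), Polynomial.X ^ j) : ℚ[X]).coeff m)
              * Polynomial.X ^ m
          else 0 := by
  have hsum : ∑ i, t i = topDeg t + 2 * l := by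
    rw [topDeg, Finset.sum_congr rfl fun i _ => (Nat.sub_add_cancel (ht i).1).symm,
      Finset.sum_add_distrib]
    simp [mul_comm]
  refine Finset.sum_congr rfl fun m _ => ?_
  split_ifs with hm
  · rw [finrank_tupSpan_inf_ker_lower_eq_coeff (by omega)]
  · rw [tupSpan_inf_ker_lower_eq_bot (by omega), finrank_bot, Nat.cast_zero, C_0, zero_mul]

/-- `∑_m dim V_{𝐭,prim}^(m) q^m = τ_{< |𝐭|/2 - l + 1} ((1-q) ∏ᵢ (q^(tᵢ-1)-1)/(q-1))`,
where `τ_{<c}` truncates to terms of degree `< c`, and the factor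
`(q^(tᵢ-1)-1)/(q-1)` is written as the geometric sum `∑_{j<tᵢ-1} q^j`.
The truncation condition `m < |𝐭|/2 - l + 1` is stated as `2(m+l) < |𝐭| + 2`. -/
theorem stmt_5 (l d : ℕ) (hl : 1 ≤ l) (t : Fin l → ℕ) (ht : ∀ i, 2 ≤ t i ∧ t i ≤ d) :
    (∑ m ∈ Finset.range ((∑ i, t i) + 1),
        Polynomial.C
          ((Module.finrank ℚ ↥(TupSpan t m ⊓ LinearMap.ker (lower t)) : ℕ) : ℚ)
          * Polynomial.X ^ m)
      = ∑ m ∈ Finset.range ((∑ i, t i) + 1),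
          if 2 * (m + l) < (∑ i, t i) + 2 then
            Polynomial.C
              (((1 - Polynomial.X) *
                  ∏ i, (∑ j ∈ Finset.range (t i - 1), Polynomial.X ^ j) : ℚ[X]).coeff m)
              * Polynomial.X ^ m
          else 0 :=
  stmt_5_general l d t ht
end

section
/- Let $\sigma^\vee \subseteq M_{\mathbf{R}}$ be the cone spanned by the images of the $e_{ij}$. Then $\sigma^\vee = \bigcap_{\vec{j} \in \{1,\ldots,d\}^l} \{ \varphi_{\vec{j}} \geq 0 \}$, where $\varphi_{\vec{j}}$ is the unique linear functional on $M_{\mathbf{R}}$ with $\varphi_{\vec{j}}(\epsilon) = 1$ and $\varphi_{\vec{j}}(e_{ij}) = 0$ for all $j \neq j_i$. In particular, $\sigma^\vee$ has exactly $d^l$ facets, given by $\tau_{\vec{j}} = \mathrm{span}_{\geq 0}\{e_{ij} : j \neq j_i\}$. -/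
/-- Standard basis vector `e_{ij}` of `ℝ^{ld}`. -/
def eR (l d : ℕ) (p : Fin l × Fin d) : Fin l × Fin d → ℝ := Pi.single p 1

/-- `ε_i = e_{i1} + ⋯ + e_{id}`. -/
def epsR (l d : ℕ) (i : Fin l) : Fin l × Fin d → ℝ := ∑ j, eR l d (i, j)

/-- The real span of the relations `ε_i - ε_{i'}`. -/
def LR (l d : ℕ) : Submodule ℝ (Fin l × Fin d → ℝ) :=
  Submodule.span ℝ (Set.range fun p : Fin l × Fin l => epsR l d p.1 - epsR l d p.2)

/-- `M_ℝ = ℝ^{ld} / L_ℝ`. -/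
abbrev MR (l d : ℕ) := (Fin l × Fin d → ℝ) ⧸ LR l d

/-- Image of `e_{ij}` in `M_ℝ`. -/
noncomputable def ebar (l d : ℕ) (p : Fin l × Fin d) : MR l d := (LR l d).mkQ (eR l d p)

/-- The common image `ε` of the `ε_i` in `M_ℝ`. -/
noncomputable def epsbar (l d : ℕ) (hl : 0 < l) : MR l d :=
  (LR l d).mkQ (epsR l d ⟨0, hl⟩)

/-- The cone `σ^∨ ⊆ M_ℝ` spanned by the images of the `e_{ij}`. -/
def sigmaDual (l d : ℕ) : Set (MR l d) :=
  {x | ∃ c : Fin l × Fin d → ℝ, (∀ p, 0 ≤ c p) ∧ x = ∑ p, c p • ebar l d p}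

lemma eR_apply (l d : ℕ) (p q : Fin l × Fin d) : eR l d p q = if q = p then 1 else 0 := by
  simp [eR, Pi.single_apply]

lemma pi_decomp (l d : ℕ) (y : Fin l × Fin d → ℝ) : y = ∑ p, y p • eR l d p := by
  funext q
  simp [Finset.sum_apply, eR_apply, Finset.sum_ite_eq]

lemma mkQ_eq (l d : ℕ) (y : Fin l × Fin d → ℝ) :
    (LR l d).mkQ y = ∑ p, y p • ebar l d p := by
  conv_lhs => rw [pi_decomp l d y]
  simp [ebar, map_sum]

lemma apply_mkQ (l d : ℕ) (ψ : MR l d →ₗ[ℝ] ℝ) (y : Fin l × Fin d → ℝ) :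
    ψ ((LR l d).mkQ y) = ∑ p, y p * ψ (ebar l d p) := by
  rw [mkQ_eq, map_sum]
  simp [smul_eq_mul]

lemma epsR_sub_mem (l d : ℕ) (i i' : Fin l) : epsR l d i - epsR l d i' ∈ LR l d :=
  Submodule.subset_span ⟨(i, i'), rfl⟩

lemma epsbar_eq (l d : ℕ) (hl : 0 < l) (i : Fin l) :
    epsbar l d hl = ∑ j, ebar l d (i, j) := by
  have h1 : (LR l d).mkQ (epsR l d i) = ∑ j, ebar l d (i, j) := by
    simp [epsR, ebar, map_sum]
  rw [← h1, epsbar]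
  have := Submodule.Quotient.eq (LR l d) (x := epsR l d ⟨0, hl⟩) (y := epsR l d i)
  exact (Submodule.Quotient.eq _).2 (epsR_sub_mem l d _ _)

lemma psi_ebar_one (l d : ℕ) (hl : 0 < l) (ψ : MR l d →ₗ[ℝ] ℝ) (jv : Fin l → Fin d)
    (h1 : ψ (epsbar l d hl) = 1)
    (h0 : ∀ (i : Fin l) (j : Fin d), j ≠ jv i → ψ (ebar l d (i, j)) = 0) (i : Fin l) :
    ψ (ebar l d (i, jv i)) = 1 := by
  have := h1
  rw [epsbar_eq l d hl i, map_sum] at this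
  rwa [Finset.sum_eq_single (jv i) (fun j _ hj => h0 i j hj) (by simp)] at this

lemma epsR_apply (l d : ℕ) (i : Fin l) (q : Fin l × Fin d) :
    epsR l d i q = if q.1 = i then 1 else 0 := by
  obtain ⟨a, b⟩ := q
  rcases eq_or_ne a i with h | h
  · subst h
    simp [epsR, Finset.sum_apply, eR_apply, Prod.ext_iff, Finset.sum_ite_eq, Finset.sum_ite_eq']
  · simp [epsR, Finset.sum_apply, eR_apply, Prod.ext_iff, h]

lemma shift_mem (l d : ℕ) (hl : 0 < l) (t : Fin l → ℝ) (ht : ∑ i, t i = 0) :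
    (fun p : Fin l × Fin d => t p.1) ∈ LR l d := by
  have h : (fun p : Fin l × Fin d => t p.1)
      = ∑ i, t i • (epsR l d i - epsR l d ⟨0, hl⟩) := by
    funext q
    simp only [Finset.sum_apply, Pi.smul_apply, Pi.sub_apply, epsR_apply, smul_eq_mul,
      mul_sub, mul_ite, mul_one, mul_zero, Finset.sum_sub_distrib, Finset.sum_ite_eq,
      Finset.mem_univ, if_true]
    by_cases h : q.1 = (⟨0, hl⟩ : Fin l) <;> simp [h, ht]
  rw [h]
  exact Submodule.sum_mem _ fun i _ => Submodule.smul_mem _ _ (epsR_sub_mem l d i ⟨0, hl⟩)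


/-- `σ^∨` is the intersection of the `d^l` half-spaces `{φ_ĵ ≥ 0}`, where `φ_ĵ` is the unique
linear functional with `φ_ĵ(ε) = 1` and `φ_ĵ(e_{ij}) = 0` for `j ≠ j_i`; such a functional
exists and is unique for each `ĵ`, and the corresponding `d^l` facets
`τ_ĵ = σ^∨ ∩ {φ_ĵ = 0}` are pairwise distinct. -/
theorem stmt_8 (l d : ℕ) (hl : 2 ≤ l) (hd : 2 ≤ d)
    (φ : (Fin l → Fin d) → (MR l d →ₗ[ℝ] ℝ))
    (hφ1 : ∀ jv, φ jv (epsbar l d (by omega)) = 1)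
    (hφ0 : ∀ jv (i : Fin l) (j : Fin d), j ≠ jv i → φ jv (ebar l d (i, j)) = 0) :
    sigmaDual l d = {x | ∀ jv : Fin l → Fin d, 0 ≤ φ jv x} ∧
    (∀ jv : Fin l → Fin d, ∃! ψ : MR l d →ₗ[ℝ] ℝ,
      ψ (epsbar l d (by omega)) = 1 ∧ ∀ (i : Fin l) (j : Fin d), j ≠ jv i → ψ (ebar l d (i, j)) = 0) ∧
    Function.Injective (fun jv : Fin l → Fin d => {x ∈ sigmaDual l d | φ jv x = 0}) := by
  have hl0 : 0 < l := by omega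
  haveI : Nonempty (Fin d) := ⟨⟨0, by omega⟩⟩
  have hone : ∀ (jv : Fin l → Fin d) (i : Fin l), φ jv (ebar l d (i, jv i)) = 1 := by
    intro jv i
    exact psi_ebar_one l d hl0 (φ jv) jv (hφ1 jv) (hφ0 jv) i
  refine ⟨?_, ?_, ?_⟩
  · ext x
    simp only [Set.mem_setOf_eq]
    constructor
    · rintro ⟨c, hc, rfl⟩ jv
      rw [map_sum]
      refine Finset.sum_nonneg fun p _ => ?_
      obtain ⟨i, j⟩ := p
      rw [map_smul, smul_eq_mul]
      rcases eq_or_ne j (jv i) with h | h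
      · subst h
        rw [hone jv i, mul_one]
        exact hc (i, jv i)
      · rw [hφ0 jv i j h, mul_zero]
    · intro hx
      obtain ⟨y, rfl⟩ := Submodule.mkQ_surjective (LR l d) x
      set m : Fin l → ℝ := fun i => Finset.univ.inf' Finset.univ_nonempty fun j => y (i, j)
        with hm
      have hmle : ∀ i j, m i ≤ y (i, j) := fun i j => Finset.inf'_le _ (Finset.mem_univ j)
      choose jm _ hjm using fun i =>
        Finset.exists_mem_eq_inf' (Finset.univ_nonempty (α := Fin d)) fun j => y (i, j)
      have hS : 0 ≤ ∑ i, m i := by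
        have h0 := hx jm
        rw [apply_mkQ, Fintype.sum_prod_type] at h0
        have hrow : ∀ i : Fin l, ∑ j, y (i, j) * φ jm (ebar l d (i, j)) = y (i, jm i) := by
          intro i
          rw [Finset.sum_eq_single (jm i)
            (fun j _ hj => by rw [hφ0 jm i j hj, mul_zero]) (by simp),
            hone jm i, mul_one]
        rw [Finset.sum_congr rfl fun i _ => hrow i] at h0
        calc (0:ℝ) ≤ ∑ i, y (i, jm i) := h0
        _ = ∑ i, m i := Finset.sum_congr rfl fun i _ => (hjm i).symm
      set t : Fin l → ℝ :=
        fun i => if i = ⟨0, hl0⟩ then (∑ i', m i') - m ⟨0, hl0⟩ else -(m i) with htdef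
      have htm : ∀ i, t i + m i = if i = ⟨0, hl0⟩ then ∑ i', m i' else 0 := by
        intro i
        simp only [htdef]
        split
        · next hh => rw [hh]; ring
        · ring
      have ht : ∑ i, t i = 0 := by
        have h2 : ∑ i, (t i + m i) = ∑ i', m i' := by
          simp [htm, Finset.sum_ite_eq']
        rw [Finset.sum_add_distrib] at h2
        linarith
      refine ⟨fun p => y p + t p.1, ?_, ?_⟩
      · rintro ⟨i, j⟩
        by_cases h : i = ⟨0, hl0⟩
        · subst h
          have := hmle (⟨0, hl0⟩ : Fin l) j
          simp only [htdef, if_pos rfl]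
          linarith
        · have := hmle i j
          simp only [htdef, if_neg h]
          linarith
      · rw [← mkQ_eq]
        refine ((Submodule.Quotient.eq (LR l d)).2 ?_)
        have : y - (fun p => y p + t p.1) = fun p : Fin l × Fin d => (-t) p.1 := by
          funext p
          simp
        rw [this]
        exact shift_mem l d hl0 (-t) (by simp [ht])
  · intro jv
    refine ⟨φ jv, ⟨hφ1 jv, hφ0 jv⟩, ?_⟩
    rintro ψ ⟨h1, h0⟩
    have key : ∀ p, ψ (ebar l d p) = φ jv (ebar l d p) := by
      rintro ⟨i, j⟩
      rcases eq_or_ne j (jv i) with h | h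
      · subst h
        rw [psi_ebar_one l d hl0 ψ jv h1 h0 i, hone jv i]
      · rw [h0 i j h, hφ0 jv i j h]
    refine LinearMap.ext fun x => ?_
    obtain ⟨y, rfl⟩ := Submodule.mkQ_surjective (LR l d) x
    rw [apply_mkQ, apply_mkQ]
    exact Finset.sum_congr rfl fun p _ => by rw [key]
  · intro jv jv' h
    funext i
    by_contra hne
    have hx : ebar l d (i, jv' i) ∈ sigmaDual l d := by
      refine ⟨fun p => if p = (i, jv' i) then 1 else 0, fun p => by by_cases hp : p = (i, jv' i) <;> simp [hp], ?_⟩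
      simp [ite_smul, Finset.sum_ite_eq']
    have h1 : ebar l d (i, jv' i) ∈ {x ∈ sigmaDual l d | φ jv x = 0} :=
      ⟨hx, hφ0 jv i (jv' i) fun e => hne e.symm⟩
    beta_reduce at h
    rw [h] at h1
    have := h1.2
    rw [hone jv' i] at this
    exact one_ne_zero this
end

section
/- Let $X$ be a degree $d$ hypersurface in $\mathbb{P}^n$ defined by a homogeneous polynomial $f$. Suppose $f$ is GIT semistable in the sense of the Hilbert–Mumford criterion: for every weight vector $w \in \mathbf{Q}^{n+1}$ and every $g \in SL(n+1)$, $\mathrm{wt}_w(f \circ g) \leq \frac{d}{n+1}\sum_i w_i$, where $\mathrm{wt}_w(h) = \min\{\langle w, \alpha\rangle : \text{the monomial } x^\alpha \text{ appears in } h\}$. Then for any weights $(w_1,\ldots,w_d,v_0,\ldots,v_{m+1})$ the polynomial $F(y,x) = y_1\cdots y_d + f(x)$, after conjugation by block-diagonal matrices $\mathrm{diag}(\Lambda, g)$ with $\Lambda$ diagonal, satisfies $\mathrm{wt}_{(w,v)}(F\circ\widetilde{g}) = \min\{\sum_{i=1}^d w_i, \mathrm{wt}_v(f\circ g)\} \leq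 \frac{d}{m+d+2}\left(\sum_i w_i + \sum_j v_j\right)$, where $n = m+1$. -/
/-!
The block-diagonal substitution sends `y₁⋯y_d` to `(∏ Λᵢ) y₁⋯y_d` and `f` to `f ∘ g` in the
`x`-variables alone; the two have disjoint supports, so the weight of `F ∘ g̃` is
`min {∑ wᵢ, wt_v (f ∘ g)}`. Since `f` is homogeneous, rescaling `g` into `SL` only multiplies
`f ∘ g` by a nonzero constant, so semistability gives `wt_v (f ∘ g) ≤ d/(m+2) ∑ vⱼ`. Finally
`d/(m+d+2) (A + B)` is a convex combination of `A` and `d/(m+2) B`, hence bounds their minimum.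
-/

open MvPolynomial

-- The zero polynomial has weight `⊤`.
def wt {σ : Type*} (w : σ → ℚ) (h : MvPolynomial σ ℂ) : WithTop ℚ :=
  h.support.inf fun α => ((∑ i ∈ α.support, w i * (α i : ℚ) : ℚ) : WithTop ℚ)

section Weight

variable {σ τ : Type*}

lemma wt_eq_inf_weight (w : σ → ℚ) (h : MvPolynomial σ ℂ) :
    wt w h = h.support.inf fun α => ((Finsupp.weight w α : ℚ) : WithTop ℚ) := by
  simp only [wt, Finsupp.weight_apply, Finsupp.sum, nsmul_eq_mul, mul_comm]

lemma wt_monomial (w : σ → ℚ) (α : σ →₀ ℕ) {a : ℂ} (ha : a ≠ 0) :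
    wt w (monomial α a) = ((Finsupp.weight w α : ℚ) : WithTop ℚ) := by
  classical
  rw [wt_eq_inf_weight, support_monomial, if_neg ha, Finset.inf_singleton]

lemma wt_prod_X [Fintype τ] (w : σ → ℚ) (e : τ → σ) :
    wt w (∏ i, X (e i)) = ((∑ i, w (e i) : ℚ) : WithTop ℚ) := by
  simp only [X, ← monomial_sum_one, wt_monomial w _ one_ne_zero, map_sum, Finsupp.weight_single,
    one_smul]

lemma wt_smul (w : σ → ℚ) {c : ℂ} (hc : c ≠ 0) (p : MvPolynomial σ ℂ) :
    wt w (c • p) = wt w p := by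
  rw [wt, wt, support_smul_eq hc]

lemma wt_add_of_disjoint (w : σ → ℚ) {p q : MvPolynomial σ ℂ}
    (h : Disjoint p.support q.support) :
    wt w (p + q) = min (wt w p) (wt w q) := by
  classical
  rw [wt, wt, wt, show (p + q).support = p.support ∪ q.support from Finsupp.support_add_eq h,
    Finset.inf_union]

lemma wt_rename (w : σ → ℚ) {e : τ → σ} (he : Function.Injective e) (q : MvPolynomial τ ℂ) :
    wt w (rename e q) = wt (w ∘ e) q := by
  classical
  rw [wt_eq_inf_weight, wt_eq_inf_weight, support_rename_of_injective he, Finset.inf_image]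
  refine Finset.inf_congr rfl fun α _ => ?_
  simp only [Function.comp_apply, Finsupp.weight, LinearMap.toAddMonoidHom_coe,
    Finsupp.linearCombination_mapDomain]

end Weight

lemma MvPolynomial.IsHomogeneous.aeval_smul {R S σ : Type*} [CommSemiring R] [CommSemiring S]
    [Algebra R S] {f : MvPolynomial σ R} {d : ℕ} (hf : f.IsHomogeneous d) (c : R) (φ : σ → S) :
    MvPolynomial.aeval (fun j => c • φ j) f = c ^ d • MvPolynomial.aeval φ f := by
  conv_lhs => rw [← f.support_sum_monomial_coeff]
  conv_rhs => rw [← f.support_sum_monomial_coeff]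
  simp only [map_sum, Finset.smul_sum, aeval_monomial]
  refine Finset.sum_congr rfl fun α hα => ?_
  have hdeg : ∑ j ∈ α.support, α j = d := by
    simpa [Finsupp.weight_apply, Finsupp.sum] using hf (mem_support_iff.mp hα)
  simp only [Finsupp.prod, smul_pow, Finset.prod_smul, Finset.prod_pow_eq_pow_sum, hdeg,
    mul_smul_comm]

lemma Matrix.exists_ne_zero_det_smul_eq_one {K n : Type*} [Field K] [IsAlgClosed K] [Fintype n]
    [DecidableEq n] [Nonempty n] {A : Matrix n n K} (hA : A.det ≠ 0) :
    ∃ c : K, c ≠ 0 ∧ (c • A).det = 1 := by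
  obtain ⟨c, hc⟩ := IsAlgClosed.exists_pow_nat_eq A.det⁻¹ (Fintype.card_pos (α := n))
  refine ⟨c, ne_zero_pow Fintype.card_ne_zero (hc ▸ inv_ne_zero hA), ?_⟩
  rw [Matrix.det_smul, hc, inv_mul_cancel₀ hA]

section LinearSubstitution

variable {κ : Type*} [Fintype κ]

lemma wt_aeval_matrix_smul (v : κ → ℚ) {f : MvPolynomial κ ℂ} {d : ℕ} (hf : f.IsHomogeneous d)
    (A : Matrix κ κ ℂ) {c : ℂ} (hc : c ≠ 0) :
    wt v (aeval (fun j => ∑ k, (c • A) j k • X k) f)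
      = wt v (aeval (fun j => ∑ k, A j k • X k) f) := by
  simp only [Matrix.smul_apply, smul_eq_mul, mul_smul, ← Finset.smul_sum]
  rw [hf.aeval_smul, wt_smul _ (pow_ne_zero _ hc)]

lemma wt_aeval_le_of_forall_specialLinearGroup [DecidableEq κ] [Nonempty κ] {v : κ → ℚ}
    {f : MvPolynomial κ ℂ} {d : ℕ} (hf : f.IsHomogeneous d) {b : WithTop ℚ}
    (hss : ∀ g : Matrix.SpecialLinearGroup κ ℂ,
      wt v (aeval (fun j => ∑ k, (g : Matrix κ κ ℂ) j k • X k) f) ≤ b)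
    {A : Matrix κ κ ℂ} (hA : A.det ≠ 0) :
    wt v (aeval (fun j => ∑ k, A j k • X k) f) ≤ b := by
  obtain ⟨c, hc, hdet⟩ := Matrix.exists_ne_zero_det_smul_eq_one hA
  rw [← wt_aeval_matrix_smul v hf A hc]
  exact hss ⟨c • A, hdet⟩

lemma aeval_sumElim_prod_X_add_rename {R ι : Type*} [CommSemiring R] [Fintype ι] (c : ι → R)
    (A : Matrix κ κ R) (f : MvPolynomial κ R) :
    aeval (Sum.elim (fun i => c i • X (Sum.inl i)) (fun j => ∑ k, A j k • X (Sum.inr k)))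
        ((∏ i, X (Sum.inl i) : MvPolynomial (ι ⊕ κ) R) + rename Sum.inr f)
      = (∏ i, c i) • ∏ i : ι, X (Sum.inl i)
          + rename Sum.inr (aeval (fun j => ∑ k, A j k • (X k : MvPolynomial κ R)) f) := by
  rw [map_add, map_prod, aeval_rename, comp_aeval_apply]
  simp only [aeval_X, Sum.elim_inl, Finset.prod_smul, Function.comp_def, Sum.elim_inr, map_sum,
    map_smul, rename_X]

end LinearSubstitution

lemma wt_smul_prod_X_add_rename {ι κ : Type*} [Fintype ι] [Nonempty ι] (w : ι → ℚ) (v : κ → ℚ)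
    {c : ℂ} (hc : c ≠ 0) (P : MvPolynomial κ ℂ) :
    wt (Sum.elim w v) (c • (∏ i, X (Sum.inl i)) + rename Sum.inr P)
      = min ((∑ i, w i : ℚ) : WithTop ℚ) (wt v P) := by
  classical
  have hdisj : Disjoint (c • ∏ i, X (Sum.inl i) : MvPolynomial (ι ⊕ κ) ℂ).support
      (rename Sum.inr P).support := by
    -- `∏ yᵢ` involves the variable `inl i₀`, which no monomial of `rename inr P` does.
    obtain ⟨i₀⟩ := ‹Nonempty ι›
    simp only [X, ← monomial_sum_one, support_smul_eq hc, support_monomial, if_neg one_ne_zero,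
      Finset.disjoint_singleton_left, support_rename_of_injective Sum.inr_injective,
      Finset.mem_image, not_exists, not_and]
    intro β _ hβ
    have := DFunLike.congr_fun hβ (Sum.inl i₀)
    simp [Finsupp.mapDomain_of_notMem_range, Finsupp.finsetSum_apply, Finsupp.single_apply] at this
  rw [wt_add_of_disjoint _ hdisj, wt_smul _ hc, wt_prod_X, wt_rename _ Sum.inr_injective,
    Sum.elim_comp_inr]
  simp only [Sum.elim_inl]

lemma min_le_div_add_mul_add {K : Type*} [Field K] [LinearOrder K] [IsStrictOrderedRing K]
    {p q : K} (hp : 0 ≤ p) (hq : 0 < q) (A B : K) :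
    min A (p / q * B) ≤ p / (p + q) * (A + B) := by
  calc min A (p / q * B)
      = p / (p + q) * min A (p / q * B) + q / (p + q) * min A (p / q * B) := by
        field_simp
    _ ≤ p / (p + q) * A + q / (p + q) * (p / q * B) := by
        gcongr
        exacts [min_le_left _ _, min_le_right _ _]
    _ = p / (p + q) * (A + B) := by
        field_simp

theorem stmt_15_general (d m : ℕ) (hd : 1 ≤ d)
    (f : MvPolynomial (Fin (m + 2)) ℂ) (hf : f.IsHomogeneous d)
    (hss : ∀ (v : Fin (m + 2) → ℚ) (g : Matrix.SpecialLinearGroup (Fin (m + 2)) ℂ),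
      wt v (MvPolynomial.aeval
          (fun j : Fin (m + 2) =>
            ∑ k, (g : Matrix (Fin (m + 2)) (Fin (m + 2)) ℂ) j k • MvPolynomial.X k) f)
        ≤ (((d : ℚ) / (m + 2) * ∑ j, v j : ℚ) : WithTop ℚ))
    (w : Fin d → ℚ) (v : Fin (m + 2) → ℚ)
    (Λ : Fin d → ℂˣ) (g : GL (Fin (m + 2)) ℂ) :
    wt (Sum.elim w v)
        (MvPolynomial.aeval
          (Sum.elim
            (fun i : Fin d => (Λ i : ℂ) • MvPolynomial.X (Sum.inl i))
            (fun j : Fin (m + 2) =>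
              ∑ k, (g : Matrix (Fin (m + 2)) (Fin (m + 2)) ℂ) j k
                • MvPolynomial.X (Sum.inr k)))
          ((∏ i : Fin d, MvPolynomial.X (Sum.inl i))
            + MvPolynomial.rename Sum.inr f))
      = min ((((∑ i, w i : ℚ)) : WithTop ℚ))
          (wt v (MvPolynomial.aeval
            (fun j : Fin (m + 2) =>
              ∑ k, (g : Matrix (Fin (m + 2)) (Fin (m + 2)) ℂ) j k • MvPolynomial.X k) f)) ∧
    wt (Sum.elim w v)
        (MvPolynomial.aeval
          (Sum.elim
            (fun i : Fin d => (Λ i : ℂ) • MvPolynomial.X (Sum.inl i))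
            (fun j : Fin (m + 2) =>
              ∑ k, (g : Matrix (Fin (m + 2)) (Fin (m + 2)) ℂ) j k
                • MvPolynomial.X (Sum.inr k)))
          ((∏ i : Fin d, MvPolynomial.X (Sum.inl i))
            + MvPolynomial.rename Sum.inr f))
      ≤ (((d : ℚ) / (m + d + 2) * ((∑ i, w i) + ∑ j, v j) : ℚ) : WithTop ℚ) := by
  have : Nonempty (Fin d) := Fin.pos_iff_nonempty.mp hd
  have hΛ : ∏ i, (Λ i : ℂ) ≠ 0 := Finset.prod_ne_zero_iff.mpr fun i _ => (Λ i).ne_zero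
  rw [aeval_sumElim_prod_X_add_rename, wt_smul_prod_X_add_rename w v hΛ]
  refine ⟨rfl, ?_⟩
  have hwt := wt_aeval_le_of_forall_specialLinearGroup hf (hss v) g.det_ne_zero
  calc min ((∑ i, w i : ℚ) : WithTop ℚ) _
      ≤ min ((∑ i, w i : ℚ) : WithTop ℚ) (((d : ℚ) / (m + 2) * ∑ j, v j : ℚ) : WithTop ℚ) :=
        min_le_min_left _ hwt
    _ ≤ (((d : ℚ) / (m + d + 2) * ((∑ i, w i) + ∑ j, v j) : ℚ) : WithTop ℚ) := by
        rw [← WithTop.coe_min, WithTop.coe_le_coe, show (m : ℚ) + d + 2 = d + (m + 2) by ring]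
        exact min_le_div_add_mul_add d.cast_nonneg (by positivity) _ _

/-- If `f` (homogeneous of degree `d` in `m+2` variables) is GIT semistable in the sense of the
Hilbert–Mumford criterion, then for `F(y,x) = y₁⋯y_d + f(x)` and any block-diagonal
substitution `diag(Λ, g)` (with `Λ` diagonal invertible and `det Λ · det g = 1`) and any
weights `(w, v)` one has
`wt_{(w,v)}(F ∘ g̃) = min {∑ wᵢ, wt_v(f ∘ g)} ≤ d/(m+d+2) (∑ wᵢ + ∑ vⱼ)`. -/
theorem stmt_15 (d m : ℕ) (hd : 1 ≤ d)
    (f : MvPolynomial (Fin (m + 2)) ℂ) (hf : f.IsHomogeneous d)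
    (hss : ∀ (v : Fin (m + 2) → ℚ) (g : Matrix.SpecialLinearGroup (Fin (m + 2)) ℂ),
      wt v (MvPolynomial.aeval
          (fun j : Fin (m + 2) =>
            ∑ k, (g : Matrix (Fin (m + 2)) (Fin (m + 2)) ℂ) j k • MvPolynomial.X k) f)
        ≤ (((d : ℚ) / (m + 2) * ∑ j, v j : ℚ) : WithTop ℚ))
    (w : Fin d → ℚ) (v : Fin (m + 2) → ℚ)
    (Λ : Fin d → ℂˣ) (g : GL (Fin (m + 2)) ℂ)
    (hdet : (∏ i, (Λ i : ℂ)) * (g : Matrix (Fin (m + 2)) (Fin (m + 2)) ℂ).det = 1) :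
    wt (Sum.elim w v)
        (MvPolynomial.aeval
          (Sum.elim
            (fun i : Fin d => (Λ i : ℂ) • MvPolynomial.X (Sum.inl i))
            (fun j : Fin (m + 2) =>
              ∑ k, (g : Matrix (Fin (m + 2)) (Fin (m + 2)) ℂ) j k
                • MvPolynomial.X (Sum.inr k)))
          ((∏ i : Fin d, MvPolynomial.X (Sum.inl i))
            + MvPolynomial.rename Sum.inr f))
      = min ((((∑ i, w i : ℚ)) : WithTop ℚ))
          (wt v (MvPolynomial.aeval
            (fun j : Fin (m + 2) =>
              ∑ k, (g : Matrix (Fin (m + 2)) (Fin (m + 2)) ℂ) j k • MvPolynomial.X k) f)) ∧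
    wt (Sum.elim w v)
        (MvPolynomial.aeval
          (Sum.elim
            (fun i : Fin d => (Λ i : ℂ) • MvPolynomial.X (Sum.inl i))
            (fun j : Fin (m + 2) =>
              ∑ k, (g : Matrix (Fin (m + 2)) (Fin (m + 2)) ℂ) j k
                • MvPolynomial.X (Sum.inr k)))
          ((∏ i : Fin d, MvPolynomial.X (Sum.inl i))
            + MvPolynomial.rename Sum.inr f))
      ≤ (((d : ℚ) / (m + d + 2) * ((∑ i, w i) + ∑ j, v j) : ℚ) : WithTop ℚ) :=
  stmt_15_general d m hd f hf hss w v Λ g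
end
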